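/- arXiv:1312.0127 — 3 statements merged into one kernel-verified Lean document; each statement's English description precedes it below -/
import Mathlib

section
/- Let L be a set of literals, let M ⊆ L be a consistent set of literals, and let π be the possibility distribution defined by π(ω) = 1 if ω satisfies every literal of M and π(ω) = 0 otherwise. Then M = {l ∈ L : N(l) = 1}, where N is the necessity measure induced by π. -/
open Classical

namespace PASP

/-- An interpretation assigns a truth value to each atom. -/
abbrev Interp (A : Type) := A → Bool

/-- A literal is an atom together with a sign (`true` = positive literal `a`,
`false` = classically negated literal `¬a`). -/
abbrev Lit (A : Type) := A × Bool

/-- A possibility distribution on interpretations. -/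
abbrev PossDist (A : Type) := Interp A → ℝ

variable {A : Type}

/-- Satisfaction of a literal by an interpretation. -/
def litSat (ω : Interp A) (l : Lit A) : Prop := ω l.1 = l.2

/-- The possibility measure of a proposition (given as a satisfaction predicate). -/
noncomputable def poss (π : PossDist A) (p : Interp A → Prop) : ℝ :=
  sSup {x | ∃ ω, p ω ∧ π ω = x}

/-- The necessity measure of a proposition. -/
noncomputable def nec (π : PossDist A) (p : Interp A → Prop) : ℝ :=
  1 - poss π fun ω => ¬ p ω

/-- The necessity of a literal. -/
noncomputable def necLit (π : PossDist A) (l : Lit A) : ℝ :=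
  nec π fun ω => litSat ω l

/-- A set of literals is consistent when it contains no atom together with its
classical negation. -/
def Consistent (M : Set (Lit A)) : Prop :=
  ∀ a : A, ¬ ((a, true) ∈ M ∧ (a, false) ∈ M)

/-- if `M ⊆ L` is a consistent set of literals and `π` is the
possibility distribution mapping exactly the models of `M` to 1 and the rest to 0,
then `M = {l ∈ L : N(l) = 1}`. -/
theorem stmt0 {A : Type} [Fintype A] (L M : Set (Lit A)) (hML : M ⊆ L)
    (hM : Consistent M) (π : PossDist A)
    (hπ : ∀ ω : Interp A, π ω = if ∀ l ∈ M, litSat ω l then 1 else 0) :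
    M = {l ∈ L | necLit π l = 1} := by
  classical
  ext l
  simp only [Set.mem_setOf_eq]
  constructor
  · intro hl
    refine ⟨hML hl, ?_⟩
    unfold necLit nec
    have hS : {x | ∃ ω, ¬ litSat ω l ∧ π ω = x} = {0} := by
      ext x
      simp only [Set.mem_setOf_eq, Set.mem_singleton_iff]
      constructor
      · rintro ⟨ω, hω, rfl⟩
        rw [hπ, if_neg]
        intro h
        exact hω (h l hl)
      · rintro rfl
        refine ⟨fun _ => !l.2, ?_, ?_⟩
        · simp [litSat]
        · rw [hπ, if_neg]
          intro h
          have := h l hl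
          simp [litSat] at this
    unfold poss
    rw [hS, csSup_singleton]
    ring
  · rintro ⟨hlL, hl⟩
    by_contra hlM
    set ω : Interp A := fun a => if a = l.1 then !l.2 else if (a, true) ∈ M then true else false with hω
    have hsat : ∀ m ∈ M, litSat ω m := by
      intro m hm
      unfold litSat
      by_cases h1 : m.1 = l.1
      · have h2 : m.2 ≠ l.2 := by
          intro h2
          exact hlM (by rwa [Prod.ext h1 h2] at hm)
        simp only [hω, h1, if_pos rfl]
        cases hl2 : l.2 <;> cases hm2 : m.2 <;> simp_all
      · simp only [hω, if_neg h1]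
        cases hm2 : m.2
        · rw [if_neg]
          intro hmem
          exact hM m.1 ⟨hmem, by rwa [show m = (m.1, false) from Prod.ext rfl hm2] at hm⟩
        · rw [if_pos (by rwa [show m = (m.1, true) from Prod.ext rfl hm2] at hm)]
    have hπω : π ω = 1 := by rw [hπ, if_pos hsat]
    have hnot : ¬ litSat ω l := by simp [litSat, hω]
    have h1mem : (1:ℝ) ∈ {x | ∃ ω, ¬ litSat ω l ∧ π ω = x} := ⟨ω, hnot, hπω⟩
    have hbdd : BddAbove {x | ∃ ω, ¬ litSat ω l ∧ π ω = x} := by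
      refine ⟨1, ?_⟩
      rintro x ⟨ω', _, rfl⟩
      rw [hπ]
      split <;> norm_num
    have hge : poss π (fun ω => ¬ litSat ω l) ≥ 1 := le_csSup hbdd h1mem
    unfold necLit nec at hl
    linarith

end PASP
end

section
/- Let P be a simple program and let π ∈ S_P be a minimally specific possibilistic model of P. Then either M = {l ∈ Lit_P : N(l) = 1} is the unique consistent answer set of P, or π is the vacuous possibility distribution, in which case P has no consistent answer set. -/
/-!
Let `cl P` be the least set of literals closed under the rules of `P`. Every model of `P`
contains `cl P`, so (when there is an atom) `P` has a consistent answer set iff `cl P` is a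
consistent model of `P`, and then `cl P` is its only answer set. Every possibilistic model has
`N(l) = 1` on `cl P`; if `cl P` is inconsistent or fires a constraint rule, this forces
`π = 0`. Otherwise the indicator of the interpretations satisfying `cl P` is a possibilistic
model; as possibilistic models are closed under pointwise `max`, a minimally specific `π`
dominates it, so `N(l) < 1` for every `l ∉ cl P`.
-/

open Classical

namespace PASP

variable {A : Type}

def IsPossDist (π : PossDist A) : Prop := ∀ ω, 0 ≤ π ω ∧ π ω ≤ 1

/-- A simple rule `l₀ ← l₁,…,l_m`; a head `none` stands for `⊥` (constraint rule). -/
structure SimpleRule (A : Type) where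
  head : Option (Lit A)
  body : Finset (Lit A)

/-- A consistent set of literals `I` is a model of a simple rule if the head is in `I`
whenever the body is contained in `I` (for a constraint rule the body must not be
contained in `I`). -/
def ruleModel (I : Set (Lit A)) (r : SimpleRule A) : Prop :=
  (↑r.body : Set (Lit A)) ⊆ I → ∃ l, r.head = some l ∧ l ∈ I

/-- Models of a simple program: the consistent sets of literals that are models of all
rules, together with the set of all literals itself. -/
def IsModel (P : Set (SimpleRule A)) (I : Set (Lit A)) : Prop :=
  (Consistent I ∧ ∀ r ∈ P, ruleModel I r) ∨ I = Set.univ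

/-- An answer set of a simple program is a minimal model with respect to set inclusion. -/
def IsAnswerSet (P : Set (SimpleRule A)) (I : Set (Lit A)) : Prop :=
  IsModel P I ∧ ∀ J, IsModel P J → J ⊆ I → J = I

/-- Necessity of the head of a simple rule (`N(⊥) = 1 - Π(⊤)` for constraint rules). -/
noncomputable def headNec (π : PossDist A) : Option (Lit A) → ℝ
  | some l => necLit π l
  | none => nec π fun _ => False

/-- `min(N(l₁),…,N(l_m))`, where the minimum of the empty list is 1. -/
noncomputable def minBody (π : PossDist A) (B : Finset (Lit A)) : ℝ :=
  sInf (insert 1 (necLit π '' (↑B : Set (Lit A))))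

/-- The constraint `N(l₀) ≥ min(N(l₁),…,N(l_m))` imposed by a simple rule. -/
def simpleConstraint (π : PossDist A) (r : SimpleRule A) : Prop :=
  minBody π r.body ≤ headNec π r.head

/-- The possibilistic models of a simple program. -/
def possModels (P : Set (SimpleRule A)) : Set (PossDist A) :=
  {π | IsPossDist π ∧ ∀ r ∈ P, simpleConstraint π r}

/-- `π` is a minimally specific element of `S`: it belongs to `S` and no pointwise
greater element of `S` differs from it. -/
def MinSpecific (S : Set (PossDist A)) (π : PossDist A) : Prop :=
  π ∈ S ∧ ∀ π' ∈ S, π ≤ π' → π' = π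

section Possibility

variable {π ρ : PossDist A}

lemma le_poss (hπ : IsPossDist π) {p : Interp A → Prop} {ω : Interp A} (h : p ω) :
    π ω ≤ poss π p :=
  le_csSup ⟨1, by rintro x ⟨ω, -, rfl⟩; exact (hπ ω).2⟩ ⟨ω, h, rfl⟩

lemma poss_nonneg (hπ : IsPossDist π) (p : Interp A → Prop) : 0 ≤ poss π p :=
  Real.sSup_nonneg (by rintro x ⟨ω, -, rfl⟩; exact (hπ ω).1)

lemma poss_le_one (hπ : IsPossDist π) (p : Interp A → Prop) : poss π p ≤ 1 :=
  Real.sSup_le (by rintro x ⟨ω, -, rfl⟩; exact (hπ ω).2) zero_le_one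

lemma poss_mono (hρ : IsPossDist ρ) (h : π ≤ ρ) (p : Interp A → Prop) :
    poss π p ≤ poss ρ p :=
  Real.sSup_le (by rintro x ⟨ω, hω, rfl⟩; exact (h ω).trans (le_poss hρ hω))
    (poss_nonneg hρ p)

lemma poss_eq_zero_iff (hπ : IsPossDist π) {p : Interp A → Prop} :
    poss π p = 0 ↔ ∀ ω, p ω → π ω = 0 := by
  refine ⟨fun h ω hω => le_antisymm (h ▸ le_poss hπ hω) (hπ ω).1, fun h => ?_⟩
  refine le_antisymm (Real.sSup_le ?_ le_rfl) (poss_nonneg hπ p)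
  rintro x ⟨ω, hω, rfl⟩
  exact (h ω hω).le

lemma nec_eq_one_iff (hπ : IsPossDist π) {p : Interp A → Prop} :
    nec π p = 1 ↔ ∀ ω, ¬ p ω → π ω = 0 := by
  rw [nec, sub_eq_self, poss_eq_zero_iff hπ]

lemma necLit_eq_one_iff (hπ : IsPossDist π) {l : Lit A} :
    necLit π l = 1 ↔ ∀ ω, ¬ litSat ω l → π ω = 0 :=
  nec_eq_one_iff hπ

lemma necLit_nonneg (hπ : IsPossDist π) (l : Lit A) : 0 ≤ necLit π l :=
  sub_nonneg.2 (poss_le_one hπ _)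

lemma necLit_le_one (hπ : IsPossDist π) (l : Lit A) : necLit π l ≤ 1 :=
  sub_le_self _ (poss_nonneg hπ _)

lemma IsPossDist.sup (hπ : IsPossDist π) (hρ : IsPossDist ρ) : IsPossDist (π ⊔ ρ) :=
  fun ω => ⟨le_sup_of_le_left (hπ ω).1, sup_le (hπ ω).2 (hρ ω).2⟩

lemma poss_sup (hπ : IsPossDist π) (hρ : IsPossDist ρ) (p : Interp A → Prop) :
    poss (π ⊔ ρ) p = poss π p ⊔ poss ρ p := by
  have hπρ := hπ.sup hρ
  refine le_antisymm ?_ (sup_le (poss_mono hπρ le_sup_left p) (poss_mono hπρ le_sup_right p))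
  refine Real.sSup_le ?_ (le_sup_of_le_left (poss_nonneg hπ p))
  rintro x ⟨ω, hω, rfl⟩
  exact sup_le_sup (le_poss hπ hω) (le_poss hρ hω)

lemma nec_sup (hπ : IsPossDist π) (hρ : IsPossDist ρ) (p : Interp A → Prop) :
    nec (π ⊔ ρ) p = nec π p ⊓ nec ρ p := by
  rw [nec, nec, nec, poss_sup hπ hρ, sub_sup]

lemma headNec_sup (hπ : IsPossDist π) (hρ : IsPossDist ρ) (h : Option (Lit A)) :
    headNec (π ⊔ ρ) h = headNec π h ⊓ headNec ρ h := by
  cases h <;> exact nec_sup hπ hρ _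

lemma headNec_nonneg (hπ : IsPossDist π) (h : Option (Lit A)) : 0 ≤ headNec π h := by
  cases h with
  | none => exact sub_nonneg.2 (poss_le_one hπ _)
  | some l => exact necLit_nonneg hπ l

lemma headNec_le_one (hπ : IsPossDist π) (h : Option (Lit A)) : headNec π h ≤ 1 := by
  cases h with
  | none => exact sub_le_self _ (poss_nonneg hπ _)
  | some l => exact necLit_le_one hπ l

lemma headNec_none_eq_one_iff (hπ : IsPossDist π) : headNec π none = 1 ↔ ∀ ω, π ω = 0 := by
  rw [headNec, nec_eq_one_iff hπ]
  simp only [not_false_eq_true, forall_const]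

lemma le_minBody_iff {B : Finset (Lit A)} {x : ℝ} :
    x ≤ minBody π B ↔ x ≤ 1 ∧ ∀ l ∈ B, x ≤ necLit π l := by
  have hfin : (insert (1 : ℝ) (necLit π '' (↑B : Set (Lit A)))).Finite :=
    ((B.finite_toSet.image _).insert 1)
  rw [minBody, le_csInf_iff hfin.bddBelow (Set.insert_nonempty _ _)]
  simp only [Set.mem_insert_iff, Set.mem_image, Finset.mem_coe, forall_eq_or_imp,
    forall_exists_index, and_imp, forall_apply_eq_imp_iff₂]

lemma minBody_le_necLit {B : Finset (Lit A)} {l : Lit A} (hl : l ∈ B) :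
    minBody π B ≤ necLit π l :=
  (le_minBody_iff.1 le_rfl).2 l hl

lemma minBody_mono {B : Finset (Lit A)} (h : ∀ l ∈ B, necLit π l ≤ necLit ρ l) :
    minBody π B ≤ minBody ρ B :=
  le_minBody_iff.2 ⟨(le_minBody_iff.1 le_rfl).1,
    fun l hl => (minBody_le_necLit hl).trans (h l hl)⟩

lemma sup_mem_possModels {P : Set (SimpleRule A)} (hπ : π ∈ possModels P)
    (hρ : ρ ∈ possModels P) : π ⊔ ρ ∈ possModels P := by
  refine ⟨hπ.1.sup hρ.1, fun r hr => ?_⟩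
  have hnec (l : Lit A) : necLit (π ⊔ ρ) l = necLit π l ⊓ necLit ρ l := nec_sup hπ.1 hρ.1 _
  rw [simpleConstraint, headNec_sup hπ.1 hρ.1]
  exact le_inf
    ((minBody_mono fun l _ => (hnec l).trans_le inf_le_left).trans (hπ.2 r hr))
    ((minBody_mono fun l _ => (hnec l).trans_le inf_le_right).trans (hρ.2 r hr))

/-- Since possibilistic models are closed under `⊔`, a minimally specific one is the greatest. -/
lemma MinSpecific.le {P : Set (SimpleRule A)} (hπ : MinSpecific (possModels P) π)
    (hρ : ρ ∈ possModels P) : ρ ≤ π := by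
  rw [← hπ.2 _ (sup_mem_possModels hπ.1 hρ) le_sup_left]
  exact le_sup_right

end Possibility

section LeastClosed

def Closed (P : Set (SimpleRule A)) (I : Set (Lit A)) : Prop :=
  ∀ r ∈ P, ∀ l, r.head = some l → (↑r.body : Set (Lit A)) ⊆ I → l ∈ I

def cl (P : Set (SimpleRule A)) : Set (Lit A) := ⋂₀ {I | Closed P I}

/-- The case in which `P` has a consistent answer set, namely `cl P`. -/
def Coherent (P : Set (SimpleRule A)) : Prop :=
  Consistent (cl P) ∧ ∀ r ∈ P, ruleModel (cl P) r

variable {P : Set (SimpleRule A)} {I : Set (Lit A)}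

lemma cl_subset (h : Closed P I) : cl P ⊆ I :=
  Set.sInter_subset_of_mem h

lemma closed_cl (P : Set (SimpleRule A)) : Closed P (cl P) :=
  fun r hr l hl hb _ hI => hI r hr l hl fun _ hx => hb hx _ hI

lemma closed_of_ruleModel (h : ∀ r ∈ P, ruleModel I r) : Closed P I := by
  intro r hr l hl hb
  obtain ⟨l', hl', hmem⟩ := h r hr hb
  rwa [Option.some_inj.1 (hl.symm.trans hl')]

lemma IsModel.cl_subset (h : IsModel P I) : cl P ⊆ I := by
  rcases h with ⟨-, hI⟩ | rfl
  · exact PASP.cl_subset (closed_of_ruleModel hI)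
  · exact Set.subset_univ _

lemma coherent_of_consistent_model (hcons : Consistent I) (hI : ∀ r ∈ P, ruleModel I r) :
    Coherent P := by
  have hsub : cl P ⊆ I := cl_subset (closed_of_ruleModel hI)
  refine ⟨fun a ha => hcons a ⟨hsub ha.1, hsub ha.2⟩, fun r hr hb => ?_⟩
  obtain ⟨l, hl, -⟩ := hI r hr (hb.trans hsub)
  exact ⟨l, hl, closed_cl P r hr l hl hb⟩

lemma Coherent.isModel (hP : Coherent P) : IsModel P (cl P) :=
  Or.inl hP

lemma Coherent.isAnswerSet (hP : Coherent P) : IsAnswerSet P (cl P) :=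
  ⟨hP.isModel, fun _ hJ hJP => hJP.antisymm hJ.cl_subset⟩

lemma Coherent.eq_cl_of_isAnswerSet (hP : Coherent P) (hI : IsAnswerSet P I) : I = cl P :=
  (hI.2 _ hP.isModel hI.1.cl_subset).symm

lemma not_consistent_of_isModel [Nonempty A] (hP : ¬ Coherent P) (hI : IsModel P I) :
    ¬ Consistent I := by
  intro hcons
  rcases hI with ⟨-, hI⟩ | rfl
  · exact hP (coherent_of_consistent_model hcons hI)
  · obtain ⟨a⟩ := ‹Nonempty A›
    exact hcons a ⟨trivial, trivial⟩

end LeastClosed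

section PossibilisticModels

variable {P : Set (SimpleRule A)} {π : PossDist A}

lemma cl_subset_necLit_eq_one (hπ : π ∈ possModels P) : cl P ⊆ {l | necLit π l = 1} := by
  refine cl_subset fun r hr l hl hb => ?_
  have hbody : 1 ≤ minBody π r.body := le_minBody_iff.2 ⟨le_rfl, fun l' hl' => (hb hl').ge⟩
  have hc := hπ.2 r hr
  rw [simpleConstraint, hl] at hc
  exact (necLit_le_one hπ.1 l).antisymm (hbody.trans hc)

lemma eq_zero_of_not_consistent_cl (hπ : π ∈ possModels P) (hP : ¬ Consistent (cl P))
    (ω : Interp A) : π ω = 0 := by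
  obtain ⟨a, hat, haf⟩ : ∃ a, (a, true) ∈ cl P ∧ (a, false) ∈ cl P := by
    simpa [Consistent] using hP
  have hnec (b : Bool) (hb : (a, b) ∈ cl P) : ∀ ω, ¬ litSat ω (a, b) → π ω = 0 :=
    (necLit_eq_one_iff hπ.1).1 (cl_subset_necLit_eq_one hπ hb)
  cases hω : ω a
  · exact hnec true hat ω (by simp [litSat, hω])
  · exact hnec false haf ω (by simp [litSat, hω])

lemma eq_zero_of_not_ruleModel_cl (hπ : π ∈ possModels P) {r : SimpleRule A} (hr : r ∈ P)
    (hP : ¬ ruleModel (cl P) r) (ω : Interp A) : π ω = 0 := by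
  obtain ⟨hb, hhead⟩ := Classical.not_imp.1 hP
  have hnone : r.head = none := by
    cases hh : r.head with
    | none => rfl
    | some l => exact (hhead ⟨l, hh, closed_cl P r hr l hh hb⟩).elim
  have hc := hπ.2 r hr
  rw [simpleConstraint, hnone] at hc
  have hbody : 1 ≤ minBody π r.body :=
    le_minBody_iff.2 ⟨le_rfl, fun l hl => (cl_subset_necLit_eq_one hπ (hb hl)).ge⟩
  exact (headNec_none_eq_one_iff hπ.1).1
    ((headNec_le_one hπ.1 none).antisymm (hbody.trans hc)) ω

lemma eq_zero_of_not_coherent (hπ : π ∈ possModels P) (hP : ¬ Coherent P) (ω : Interp A) :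
    π ω = 0 := by
  rw [Coherent, not_and_or, not_forall₂] at hP
  rcases hP with hcons | ⟨r, hr, hrule⟩
  · exact eq_zero_of_not_consistent_cl hπ hcons ω
  · exact eq_zero_of_not_ruleModel_cl hπ hr hrule ω

noncomputable def indicatorDist (L : Set (Lit A)) : PossDist A :=
  fun ω => if ∀ l ∈ L, litSat ω l then 1 else 0

lemma isPossDist_indicatorDist (L : Set (Lit A)) : IsPossDist (indicatorDist L) := by
  intro ω
  unfold indicatorDist
  split <;> norm_num

lemma exists_sat_of_not_mem {L : Set (Lit A)} (hL : Consistent L) {l : Lit A} (hl : l ∉ L) :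
    ∃ ω : Interp A, (∀ l' ∈ L, litSat ω l') ∧ ¬ litSat ω l := by
  obtain ⟨a, b⟩ := l
  refine ⟨Function.update (fun a' => decide ((a', true) ∈ L)) a (!b), ?_, ?_⟩
  · rintro ⟨a', b'⟩ hl'
    simp only [litSat, Function.update_apply]
    split_ifs with ha
    · subst ha
      cases b <;> cases b' <;> simp_all
    · cases b'
      · simpa using fun ht => hL a' ⟨ht, hl'⟩
      · simpa using hl'
  · simp [litSat]

lemma necLit_indicatorDist_of_mem {L : Set (Lit A)} {l : Lit A} (hl : l ∈ L) :
    necLit (indicatorDist L) l = 1 :=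
  (necLit_eq_one_iff (isPossDist_indicatorDist L)).2 fun ω hω => by
    simp only [indicatorDist, ite_eq_right_iff, one_ne_zero, imp_false, not_forall]
    exact ⟨l, hl, hω⟩

lemma necLit_indicatorDist_of_not_mem {L : Set (Lit A)} (hL : Consistent L) {l : Lit A}
    (hl : l ∉ L) : necLit (indicatorDist L) l = 0 := by
  obtain ⟨ω, hωL, hωl⟩ := exists_sat_of_not_mem hL hl
  have hpd := isPossDist_indicatorDist L
  have hω : indicatorDist L ω = 1 := if_pos hωL
  have : poss (indicatorDist L) (fun ω => ¬ litSat ω l) = 1 :=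
    (poss_le_one hpd _).antisymm (hω ▸ le_poss hpd hωl)
  rw [necLit, nec, this, sub_self]

lemma Coherent.indicatorDist_mem_possModels (hP : Coherent P) :
    indicatorDist (cl P) ∈ possModels P := by
  have hpd := isPossDist_indicatorDist (cl P)
  refine ⟨hpd, fun r hr => ?_⟩
  rw [simpleConstraint]
  by_cases hb : (↑r.body : Set (Lit A)) ⊆ cl P
  · obtain ⟨l, hl, hmem⟩ := hP.2 r hr hb
    rw [hl, headNec, necLit_indicatorDist_of_mem hmem]
    exact (le_minBody_iff.1 le_rfl).1
  · obtain ⟨l, hl, hnl⟩ := Set.not_subset.1 hb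
    calc minBody (indicatorDist (cl P)) r.body ≤ necLit (indicatorDist (cl P)) l :=
          minBody_le_necLit hl
      _ = 0 := necLit_indicatorDist_of_not_mem hP.1 hnl
      _ ≤ headNec (indicatorDist (cl P)) r.head := headNec_nonneg hpd r.head

/-- Minimal specificity forces `π ≥ indicatorDist (cl P)`, so every literal outside `cl P` is
falsified by an interpretation of possibility `1`. -/
lemma Coherent.necLit_eq_one_eq_cl (hP : Coherent P) (hπ : MinSpecific (possModels P) π) :
    {l | necLit π l = 1} = cl P := by
  refine Set.Subset.antisymm (fun l hl => ?_) (cl_subset_necLit_eq_one hπ.1)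
  by_contra hnl
  obtain ⟨ω, hωcl, hωl⟩ := exists_sat_of_not_mem hP.1 hnl
  have hle : indicatorDist (cl P) ω ≤ π ω := hπ.le hP.indicatorDist_mem_possModels ω
  rw [indicatorDist, if_pos hωcl, (necLit_eq_one_iff hπ.1.1).1 hl ω hωl] at hle
  exact one_ne_zero (hle.antisymm zero_le_one)

end PossibilisticModels

theorem stmt1_general {A : Type} (P : Set (SimpleRule A)) (π : PossDist A)
    (hπ : MinSpecific (possModels P) π) :
    (IsAnswerSet P {l : Lit A | necLit π l = 1} ∧
      Consistent {l : Lit A | necLit π l = 1} ∧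
      ∀ M' : Set (Lit A), IsAnswerSet P M' → Consistent M' →
        M' = {l : Lit A | necLit π l = 1})
    ∨ ((∀ ω, π ω = 0) ∧ ¬ ∃ M' : Set (Lit A), IsAnswerSet P M' ∧ Consistent M') := by
  rcases isEmpty_or_nonempty A with hA | hA
  -- without atoms the only set of literals is `Set.univ`, which is then consistent
  · exact Or.inl ⟨⟨Or.inr (Subsingleton.elim _ _), fun _ _ _ => Subsingleton.elim _ _⟩,
      fun a => isEmptyElim a, fun _ _ _ => Subsingleton.elim _ _⟩
  by_cases hP : Coherent P
  · rw [hP.necLit_eq_one_eq_cl hπ]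
    exact Or.inl ⟨hP.isAnswerSet, hP.1, fun M' hM' _ => hP.eq_cl_of_isAnswerSet hM'⟩
  · exact Or.inr ⟨eq_zero_of_not_coherent hπ.1 hP,
      fun ⟨M', hM', hcons⟩ => not_consistent_of_isModel hP hM'.1 hcons⟩

/-- if `π ∈ S_P` then either `M = {l : N(l) = 1}` is the unique consistent
answer set of `P`, or `π` is vacuous and `P` has no consistent answer set. -/
theorem stmt1 {A : Type} [Fintype A] (P : Set (SimpleRule A)) (π : PossDist A)
    (hπ : MinSpecific (possModels P) π) :
    (IsAnswerSet P {l : Lit A | necLit π l = 1} ∧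
      Consistent {l : Lit A | necLit π l = 1} ∧
      ∀ M' : Set (Lit A), IsAnswerSet P M' → Consistent M' →
        M' = {l : Lit A | necLit π l = 1})
    ∨ ((∀ ω, π ω = 0) ∧ ¬ ∃ M' : Set (Lit A), IsAnswerSet P M' ∧ Consistent M') :=
  stmt1_general P π hπ

end PASP
end

section
/- The possibilistic normal program P over the single atom a consisting of the single possibilistic rule (a ← not a) with weight 1 has exactly one possibilistic answer set, namely the valuation V with V(a) = 1/2 and V(¬a) = 0. -/
open Classical

namespace PASP

variable {A : Type}

/-- A possibilistic normal rule `(l₀ ← l₁,…,l_m, not l_{m+1},…, not l_n, λ)`;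
a head `none` stands for `⊥`. -/
structure PNormalRule (A : Type) where
  head : Option (Lit A)
  pos : Finset (Lit A)
  neg : Finset (Lit A)
  wt : ℝ

/-- `min(1 − V(l_{m+1}),…,1 − V(l_n))`, the empty minimum being 1. -/
noncomputable def minNeg (V : Lit A → ℝ) (B : Finset (Lit A)) : ℝ :=
  sInf (insert 1 ((fun l => 1 - V l) '' (↑B : Set (Lit A))))

/-- The constraint `N(l₀) ≥ min(N(l₁),…,N(l_m), 1−V(l_{m+1}),…,1−V(l_n), λ)` induced
by a possibilistic normal rule and a valuation `V`. -/
def pConstraint (π : PossDist A) (V : Lit A → ℝ) (r : PNormalRule A) : Prop :=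
  min (min (minBody π r.pos) (minNeg V r.neg)) r.wt ≤ headNec π r.head

/-- The possibility distributions satisfying all constraints induced by `P` and `V`. -/
def pModels (P : Set (PNormalRule A)) (V : Lit A → ℝ) : Set (PossDist A) :=
  {π | IsPossDist π ∧ ∀ r ∈ P, pConstraint π V r}

/-- A valuation maps every literal into `[0,1]`. -/
def IsVal (V : Lit A → ℝ) : Prop := ∀ l, 0 ≤ V l ∧ V l ≤ 1

/-- `V` is a possibilistic answer set of `P` when some `π ∈ S_(P,V)` satisfies
`N(l) = V(l)` for every literal `l`. -/
def PAS (P : Set (PNormalRule A)) (V : Lit A → ℝ) : Prop :=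
  IsVal V ∧ ∃ π : PossDist A, MinSpecific (pModels P V) π ∧
    ∀ l : Lit A, necLit π l = V l

/-- The program `{(a ← not a, 1)}` over the single atom `a` (the type `Unit`). -/
def P14 : Set (PNormalRule Unit) :=
  {⟨some ((), true), ∅, {((), true)}, 1⟩}

/-- The valuation `V(a) = 1/2`, `V(¬a) = 0`. -/
noncomputable def V14 : Lit Unit → ℝ := fun l => if l.2 then 1/2 else 0

lemma interp_unit_eq (ω : Interp Unit) : ω = fun _ => ω () :=
  funext fun u => by cases u; rfl

lemma necLit_unit (π : PossDist Unit) (b : Bool) :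
    necLit π ((), b) = 1 - π (fun _ => !b) := by
  unfold necLit nec poss
  have hset : {x | ∃ ω : Interp Unit, (¬ litSat ω ((), b)) ∧ π ω = x}
      = {π (fun _ => !b)} := by
    ext x
    simp only [Set.mem_setOf_eq, Set.mem_singleton_iff, litSat]
    constructor
    · rintro ⟨ω, h1, rfl⟩
      have hω : ω = fun _ => !b := by
        rw [interp_unit_eq ω]
        cases hb : ω () <;> cases b <;> simp_all
      rw [hω]
    · rintro rfl
      exact ⟨fun _ => !b, by cases b <;> simp, rfl⟩
  rw [hset, csSup_singleton]

def rule14 : PNormalRule Unit := ⟨some ((), true), ∅, {((), true)}, 1⟩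

lemma minBody_empty (π : PossDist Unit) : minBody π ∅ = 1 := by
  unfold minBody
  simp [csInf_singleton]

lemma minNeg_single (V : Lit Unit → ℝ) :
    minNeg V {((), true)} = min 1 (1 - V ((), true)) := by
  unfold minNeg
  rw [Finset.coe_singleton, Set.image_singleton]
  rw [csInf_pair]

lemma pConstraint14 (π : PossDist Unit) (V : Lit Unit → ℝ) :
    pConstraint π V rule14 ↔ min 1 (1 - V ((), true)) ≤ 1 - π (fun _ => false) := by
  unfold pConstraint
  rw [show rule14.pos = ∅ from rfl, show rule14.neg = {((), true)} from rfl,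
    show rule14.wt = (1:ℝ) from rfl, minBody_empty, minNeg_single]
  have : headNec π rule14.head = 1 - π (fun _ => false) := by
    show necLit π ((), true) = _
    rw [necLit_unit]; rfl
  rw [this]
  have heq : min (min 1 (min 1 (1 - V ((), true)))) 1 = min 1 (1 - V ((), true)) := by
    rw [← min_assoc 1 1, min_self, min_comm _ 1, ← min_assoc, min_self]
  rw [heq]

lemma mem_pModels14 (π : PossDist Unit) (V : Lit Unit → ℝ) (hV0 : 0 ≤ V ((), true)) (hV : V ((), true) ≤ 1) :
    π ∈ pModels P14 V ↔ IsPossDist π ∧ π (fun _ => false) ≤ V ((), true) := by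
  have hr : ∀ r ∈ P14, r = rule14 := by
    intro r hr; exact hr
  constructor
  · rintro ⟨h1, h2⟩
    refine ⟨h1, ?_⟩
    have := (pConstraint14 π V).mp (h2 rule14 rfl)
    have hmin : min 1 (1 - V ((), true)) = 1 - V ((), true) := by
      apply min_eq_right; linarith
    rw [hmin] at this
    linarith
  · rintro ⟨h1, h2⟩
    refine ⟨h1, ?_⟩
    intro r hrP
    rw [hr r hrP, pConstraint14]
    calc min 1 (1 - V ((), true)) ≤ 1 - V ((), true) := min_le_right _ _
      _ ≤ 1 - π (fun _ => false) := by linarith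

/-- The maximal possibility distribution for parameter `c`. -/
noncomputable def pimax (c : ℝ) : PossDist Unit := fun ω => if ω () then 1 else c

lemma pimax_true (c : ℝ) : pimax c (fun _ => true) = 1 := by simp [pimax]
lemma pimax_false (c : ℝ) : pimax c (fun _ => false) = c := by simp [pimax]

lemma pimax_minSpec (V : Lit Unit → ℝ) (hV0 : 0 ≤ V ((), true)) (hV1 : V ((), true) ≤ 1) :
    MinSpecific (pModels P14 V) (pimax (V ((), true))) := by
  set c := V ((), true)
  have hmem : pimax c ∈ pModels P14 V := by
    rw [mem_pModels14 _ _ hV0 hV1]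
    constructor
    · intro ω
      rw [interp_unit_eq ω]
      cases ω () <;> simp [pimax, hV0, hV1]
    · rw [pimax_false]
  refine ⟨hmem, ?_⟩
  intro π' hπ' hle
  obtain ⟨hd, hc⟩ := (mem_pModels14 _ _ hV0 hV1).mp hπ'
  funext ω
  rw [interp_unit_eq ω]
  cases hb : ω ()
  · have h1 := hle (fun _ => false)
    rw [pimax_false] at h1 ⊢
    linarith
  · have h1 := hle (fun _ => true)
    rw [pimax_true] at h1 ⊢
    have := (hd (fun _ => true)).2
    linarith

lemma minSpec_eq_pimax (V : Lit Unit → ℝ) (hV0 : 0 ≤ V ((), true)) (hV1 : V ((), true) ≤ 1)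
    (π : PossDist Unit) (h : MinSpecific (pModels P14 V) π) :
    π = pimax (V ((), true)) := by
  obtain ⟨hmem, hmax⟩ := h
  obtain ⟨hd, hc⟩ := (mem_pModels14 _ _ hV0 hV1).mp hmem
  have hle : π ≤ pimax (V ((), true)) := by
    intro ω
    rw [interp_unit_eq ω]
    cases ω ()
    · rw [pimax_false]; exact hc
    · rw [pimax_true]; exact (hd _).2
  exact (hmax _ ((pimax_minSpec V hV0 hV1).1) hle).symm

/-- the possibilistic normal program `{(a ← not a, 1)}` has exactly one
possibilistic answer set, namely `V` with `V(a) = 1/2` and `V(¬a) = 0`. -/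
theorem stmt14 : PAS P14 V14 ∧ ∀ V : Lit Unit → ℝ, PAS P14 V → V = V14 := by
  have hV14t : V14 ((), true) = 1/2 := rfl
  constructor
  · refine ⟨?_, pimax (1/2), ?_, ?_⟩
    · intro l
      unfold V14
      split <;> norm_num
    · have := pimax_minSpec V14 (by rw [hV14t]; norm_num) (by rw [hV14t]; norm_num)
      rwa [hV14t] at this
    · rintro ⟨u, b⟩
      cases u
      rw [necLit_unit]
      cases b
      · rw [show (!false) = true from rfl, pimax_true]
        norm_num [V14]
      · rw [show (!true) = false from rfl, pimax_false]
        norm_num [V14]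
  · rintro V ⟨hVal, π, hms, hnec⟩
    have hV0 := (hVal ((), true)).1
    have hV1 := (hVal ((), true)).2
    have hπ := minSpec_eq_pimax V hV0 hV1 π hms
    have ht := hnec ((), true)
    have hf := hnec ((), false)
    rw [hπ, necLit_unit] at ht hf
    rw [show (!true) = false from rfl, pimax_false] at ht
    rw [show (!false) = true from rfl, pimax_true] at hf
    have hc : V ((), true) = 1/2 := by linarith
    have hd : V ((), false) = 0 := by linarith
    funext l
    obtain ⟨u, b⟩ := l
    cases u
    cases b
    · rw [hd]; rfl
    · rw [hc]; rfl

end PASP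
end
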